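/- arXiv:1911.05457 — 2 statements merged into one kernel-verified Lean document; each statement's English description precedes it below -/
import Mathlib

section
/- Let X be a finite indecomposable cycle set of multipermutational level 2 with cyclic permutation group G(X) = ⟨α⟩. If α^a and α^b both lie in σ(X) (i.e., are left multiplications of X), then a ≡ b (mod |σ(X)|). -/
/-- A cycle set: a set with bijective left multiplications `σ x`
satisfying `(x·y)·(x·z) = (y·x)·(y·z)`. -/
structure CycleSet (X : Type*) where
  σ : X → Equiv.Perm X
  cycl : ∀ x y z : X, σ (σ x y) (σ x z) = σ (σ y x) (σ y z)

namespace CycleSet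

variable {X Y : Type*}

/-- The permutation group generated by the left multiplications. -/
def permGroup (S : CycleSet X) : Subgroup (Equiv.Perm X) :=
  Subgroup.closure (Set.range S.σ)

/-- Indecomposability: the permutation group acts transitively. -/
def Transitive (S : CycleSet X) : Prop :=
  ∀ x y : X, ∃ g ∈ S.permGroup, g x = y

/-- The permutation group is abelian. -/
def AbelianPerm (S : CycleSet X) : Prop :=
  ∀ g ∈ S.permGroup, ∀ h ∈ S.permGroup, g * h = h * g

/-- `rel S n x y` holds iff `x` and `y` become equal in the `n`-th iterated
retraction `σ^n(X)`. -/
def rel (S : CycleSet X) : ℕ → X → X → Prop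
  | 0 => Eq
  | n + 1 => fun x y => ∀ z, S.rel n (S.σ x z) (S.σ y z)

/-- The cardinality `|σ^n(X)|` of the `n`-th iterated retraction. -/
noncomputable def retCard (S : CycleSet X) (n : ℕ) : ℕ :=
  Nat.card (Quot (S.rel n))

/-- `X` is multipermutational of level `m`: `m` is minimal with `|σ^m(X)| = 1`. -/
def MultipermLevel (S : CycleSet X) (m : ℕ) : Prop :=
  (∀ x y, S.rel m x y) ∧ ∀ k < m, ¬ (∀ x y, S.rel k x y)

/-- Isomorphism of cycle sets. -/
def Isomorphic (S : CycleSet X) (T : CycleSet Y) : Prop :=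
  ∃ F : X → Y, Function.Bijective F ∧ ∀ x y, F (S.σ x y) = T.σ (F x) (F y)

end CycleSet

/-! Since `G(X)` is abelian and `σ_{σ_x z}` does not depend on `x` (level 2), the cycle set law
`σ_{σ_x z} σ_x = σ_{σ_z x} σ_z` becomes `σ_{σ_x z} = c_x σ_z` for a constant `c_x`. Hence every
`g ∈ G(X)` shifts `σ` by a constant: `σ_{g z} = c_g σ_z`. With `τ = c_α`, transitivity gives
`σ(X) = ⟨τ⟩ σ_x`, so `|σ(X)| = ord τ`, and `σ_x = α^a`, `σ_y = α^b` give
`τ^a σ_x = σ_{σ_x x} = σ_{σ_y x} = τ^b σ_x`. -/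

open Equiv

namespace CycleSet

variable {X : Type*} (S : CycleSet X)

lemma rel_one_iff {x y : X} : S.rel 1 x y ↔ S.σ x = S.σ y :=
  Perm.ext_iff.symm

lemma retCard_one : S.retCard 1 = Nat.card (Set.range S.σ) := by
  have : S.rel 1 = (Setoid.ker S.σ).r := funext₂ fun _ _ => propext S.rel_one_iff
  rw [retCard, this]
  exact Nat.card_congr (Setoid.quotientKerEquivRange S.σ)

lemma σ_σ_eq_of_rel_two (h : ∀ x y, S.rel 2 x y) (x y z : X) :
    S.σ (S.σ x z) = S.σ (S.σ y z) :=
  S.rel_one_iff.1 (h x y z)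

lemma σ_σ_mul (x y : X) : S.σ (S.σ x y) * S.σ x = S.σ (S.σ y x) * S.σ y :=
  Perm.ext fun z => S.cycl x y z

def shiftPairs : Subgroup (Perm X × Perm X) where
  carrier := {p | ∀ z, S.σ (p.1 z) = p.2 * S.σ z}
  one_mem' _ := by simp
  mul_mem' {p q} hp hq z := by
    rw [Prod.fst_mul, Perm.mul_apply, hp, hq, Prod.snd_mul, mul_assoc]
  inv_mem' {p} hp z := by
    have h := hp (p.1⁻¹ z)
    rw [← Perm.mul_apply, mul_inv_cancel, Perm.one_apply] at h
    rw [Prod.fst_inv, Prod.snd_inv, h, inv_mul_cancel_left]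

lemma σ_zpow_apply {g c : Perm X} (h : (g, c) ∈ S.shiftPairs) (d : ℤ) (z : X) :
    S.σ ((g ^ d) z) = c ^ d * S.σ z :=
  S.shiftPairs.zpow_mem h d z

lemma σ_pow_apply {g c : Perm X} (h : (g, c) ∈ S.shiftPairs) (n : ℕ) (z : X) :
    S.σ ((g ^ n) z) = c ^ n * S.σ z :=
  S.shiftPairs.pow_mem h n z

lemma exists_shiftPairs_of_mem_permGroup (hab : S.AbelianPerm) (h2 : ∀ x y, S.rel 2 x y)
    {g : Perm X} (hg : g ∈ S.permGroup) : ∃ c, (g, c) ∈ S.shiftPairs := by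
  suffices S.permGroup ≤ S.shiftPairs.map (MonoidHom.fst _ _) by
    obtain ⟨⟨_, c⟩, hp, rfl⟩ := this hg
    exact ⟨c, hp⟩
  have hσ (x : X) : S.σ x ∈ S.permGroup := Subgroup.subset_closure ⟨x, rfl⟩
  refine Subgroup.closure_le _ |>.2 <| Set.range_subset_iff.2 fun x => ?_
  refine ⟨(S.σ x, S.σ (S.σ x x) * (S.σ x)⁻¹), fun z => ?_, rfl⟩
  have hx : S.σ (S.σ x z) * S.σ x = S.σ (S.σ x x) * S.σ z := by
    rw [S.σ_σ_mul, S.σ_σ_eq_of_rel_two h2 z x x]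
  have hzx : S.σ z * (S.σ x)⁻¹ = (S.σ x)⁻¹ * S.σ z :=
    hab _ (hσ z) _ (inv_mem (hσ x))
  rw [mul_assoc, ← hzx, ← mul_assoc, ← hx, mul_inv_cancel_right]

lemma retCard_one_eq_orderOf (htr : S.Transitive) {α τ : Perm X}
    (hgen : S.permGroup ≤ Subgroup.zpowers α) (hτ : (α, τ) ∈ S.shiftPairs) (x : X) :
    S.retCard 1 = orderOf τ := by
  have hrange : Set.range S.σ = (· * S.σ x) '' (Subgroup.zpowers τ : Set (Perm X)) := by
    ext p
    constructor
    · rintro ⟨y, rfl⟩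
      obtain ⟨g, hg, rfl⟩ := htr x y
      obtain ⟨k, rfl⟩ := Subgroup.mem_zpowers_iff.1 (hgen hg)
      exact ⟨τ ^ k, ⟨k, rfl⟩, (S.σ_zpow_apply hτ k x).symm⟩
    · rintro ⟨_, ⟨k, rfl⟩, rfl⟩
      exact ⟨(α ^ k) x, S.σ_zpow_apply hτ k x⟩
  rw [retCard_one, hrange, Nat.card_image_of_injective (mul_left_injective _),
    SetLike.coe_sort_coe, Nat.card_zpowers]

end CycleSet

theorem stmt12_general {X : Type*} (S : CycleSet X) (α : Equiv.Perm X)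
    (hgen : S.permGroup = Subgroup.zpowers α) (htr : S.Transitive)
    (hlvl : S.MultipermLevel 2) (a b : ℕ)
    (ha : α ^ a ∈ Set.range S.σ) (hb : α ^ b ∈ Set.range S.σ) :
    a ≡ b [MOD S.retCard 1] := by
  have hab : S.AbelianPerm := fun g hg h hh =>
    setLike_mul_comm (hgen ▸ hg) (hgen ▸ hh)
  obtain ⟨τ, hτ⟩ :=
    S.exists_shiftPairs_of_mem_permGroup hab hlvl.1 (hgen ▸ Subgroup.mem_zpowers α)
  obtain ⟨x, hx⟩ := ha
  obtain ⟨y, hy⟩ := hb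
  rw [S.retCard_one_eq_orderOf htr hgen.le hτ x, ← pow_eq_pow_iff_modEq]
  have hxy := S.σ_σ_eq_of_rel_two hlvl.1 x y x
  rw [hx, hy, S.σ_pow_apply hτ, S.σ_pow_apply hτ] at hxy
  exact mul_right_cancel hxy

/-- In a finite indecomposable cycle set of multipermutational level 2 with
cyclic permutation group generated by `α`, if `α^a` and `α^b` are left
multiplications then `a ≡ b (mod |σ(X)|)`. -/
theorem stmt12 {X : Type*} [Finite X] (S : CycleSet X) (α : Equiv.Perm X)
    (hgen : S.permGroup = Subgroup.zpowers α) (htr : S.Transitive)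
    (hlvl : S.MultipermLevel 2) (a b : ℕ)
    (ha : α ^ a ∈ Set.range S.σ) (hb : α ^ b ∈ Set.range S.σ) :
    a ≡ b [MOD S.retCard 1] :=
  stmt12_general S α hgen htr hlvl a b ha hb
end

section
/- Let p < q be distinct primes and X a finite indecomposable cycle set of cardinality pq with cyclic permutation group. Then X has multipermutational level 1, i.e., all left multiplications σ_x coincide. -/
/-! Abelian transitive permutation groups act regularly, so `g ↦ g x₀` identifies `X` with
`G = permGroup` and `σ` becomes a map `f : G → G` with `f (f x * y) * f x = f (f y * x) * f y`
whose image generates `G`. Let `K` be the group of periods of `f`. If `K` is trivial, `f` is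
injective and the point `b` with `f b = 1` forces `f = 1`. Otherwise `f` descends to `G ⧸ K`, where
it is constant by induction on `|G|`; so `f` takes values in the coset `f 1 * K`, and
`d = f (f 1) * (f 1)⁻¹ ∈ K` satisfies `f ((f 1) ^ k) = d ^ k * f 1`, whence `d ^ |G ⧸ K| = 1`.
When `|K|` and `|G ⧸ K|` are coprime, as they are for `|G|` squarefree, `d = 1`; then `f 1 ∈ K`,
so the image of `f`, and hence `G`, lies in `K`, and `f` is constant. -/

section PeriodSubgroup

variable {M : Type*}

def periodSubgroup [Group M] (f : M → M) : Subgroup M where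
  carrier := {a | ∀ x, f (a * x) = f x}
  one_mem' x := by rw [one_mul]
  mul_mem' ha hb x := by rw [mul_assoc, ha, hb]
  inv_mem' {a} ha x := by rw [← ha, mul_inv_cancel_left]

theorem eq_of_periodSubgroup_eq_top [Group M] {f : M → M} (h : periodSubgroup f = ⊤)
    (x y : M) : f x = f y := by
  have hmem : x * y⁻¹ ∈ periodSubgroup f := h ▸ Subgroup.mem_top _
  simpa using hmem y

theorem map_mul_eq_map_mul_of_map_eq [Group M] [Finite M] {f : M → M}
    (hf : ∀ x y, f (f x * y) * f x = f (f y * x) * f y)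
    (hgen : Subgroup.closure (Set.range f) = ⊤) (a : M) {x y : M} (hxy : f x = f y) :
    f (a * x) = f (a * y) := by
  have ha : a ∈ (Subgroup.closure (Set.range f)).toSubmonoid := hgen ▸ Subgroup.mem_top a
  rw [Subgroup.closure_toSubmonoid_of_finite] at ha
  induction ha using Submonoid.closure_induction generalizing x y with
  | mem _ hz =>
    obtain ⟨z, rfl⟩ := hz
    have h := (hf x z).symm.trans (hxy ▸ hf y z)
    exact mul_right_cancel h
  | one => simpa using hxy
  | mul a b _ _ iha ihb => simpa only [mul_assoc] using iha (ihb hxy)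

variable [CommGroup M] {f : M → M}

theorem mul_inv_mem_periodSubgroup_of_map_eq [Finite M]
    (hf : ∀ x y, f (f x * y) * f x = f (f y * x) * f y)
    (hgen : Subgroup.closure (Set.range f) = ⊤) {x y : M} (hxy : f x = f y) :
    x * y⁻¹ ∈ periodSubgroup f := fun z => by
  simpa [mul_comm, mul_left_comm] using map_mul_eq_map_mul_of_map_eq hf hgen (z * y⁻¹) hxy

theorem eq_of_periodSubgroup_eq_bot [Finite M]
    (hf : ∀ x y, f (f x * y) * f x = f (f y * x) * f y)
    (hgen : Subgroup.closure (Set.range f) = ⊤) (h : periodSubgroup f = ⊥) (x y : M) :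
    f x = f y := by
  have hinj : f.Injective := fun a b hab =>
    mul_inv_eq_one.mp (by simpa [h] using mul_inv_mem_periodSubgroup_of_map_eq hf hgen hab)
  obtain ⟨b, hb⟩ := (Finite.surjective_of_injective hinj) 1
  have hone : ∀ x, f x = 1 := fun x => by
    have hfx : f (f x * b) * f x = f x := by simpa [hb] using hf x b
    have : f x * b = b := hinj (by simpa [hb] using hfx)
    simpa using this
  rw [hone x, hone y]

theorem map_eq_of_inv_mul_mem_periodSubgroup {a b : M} (h : a⁻¹ * b ∈ periodSubgroup f) :
    f a = f b := by
  simpa using (h a).symm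

def periodQuotientMap (f : M → M) : M ⧸ periodSubgroup f → M ⧸ periodSubgroup f :=
  Quotient.map' f fun a b hab => by
    rw [QuotientGroup.leftRel_apply] at hab ⊢
    rw [map_eq_of_inv_mul_mem_periodSubgroup hab, inv_mul_cancel]
    exact one_mem _

@[simp]
theorem periodQuotientMap_mk (x : M) : periodQuotientMap f (x : M ⧸ periodSubgroup f) = f x :=
  rfl

theorem periodQuotientMap_cycl (hf : ∀ x y, f (f x * y) * f x = f (f y * x) * f y)
    (u v : M ⧸ periodSubgroup f) :
    periodQuotientMap f (periodQuotientMap f u * v) * periodQuotientMap f u =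
      periodQuotientMap f (periodQuotientMap f v * u) * periodQuotientMap f v := by
  induction u using QuotientGroup.induction_on
  induction v using QuotientGroup.induction_on
  simp only [periodQuotientMap_mk, ← QuotientGroup.mk_mul, hf]

theorem closure_range_periodQuotientMap (hgen : Subgroup.closure (Set.range f) = ⊤) :
    Subgroup.closure (Set.range (periodQuotientMap f)) = ⊤ := by
  have hrange : Set.range (periodQuotientMap f) = QuotientGroup.mk' _ '' Set.range f := by
    rw [← (QuotientGroup.mk'_surjective (periodSubgroup f)).range_comp, ← Set.range_comp]
    rfl
  rw [hrange, ← MonoidHom.map_closure, hgen,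
    Subgroup.map_top_of_surjective _ (QuotientGroup.mk'_surjective _)]

theorem map_mul_eq_of_inv_mul_mem_periodSubgroup
    (hf : ∀ x y, f (f x * y) * f x = f (f y * x) * f y)
    (hcoset : ∀ x, (f x)⁻¹ * f 1 ∈ periodSubgroup f) (x : M) :
    f (f 1 * x) = f (f 1) * (f 1)⁻¹ * f x := by
  have hshift : ∀ x y, f (f x * y) = f (f 1 * y) := fun x y => by
    simpa [mul_mul_mul_comm] using (hcoset x (f x * y)).symm
  have h := hf x 1
  rw [hshift, hshift, mul_one] at h
  rw [eq_mul_inv_iff_mul_eq.mpr h.symm, mul_right_comm]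

theorem periodSubgroup_eq_top_of_coprime [Finite M]
    (hf : ∀ x y, f (f x * y) * f x = f (f y * x) * f y)
    (hgen : Subgroup.closure (Set.range f) = ⊤)
    (hcop : (Nat.card (periodSubgroup f)).Coprime (Nat.card (M ⧸ periodSubgroup f)))
    (hθ : ∀ u v, periodQuotientMap f u = periodQuotientMap f v) :
    periodSubgroup f = ⊤ := by
  set K := periodSubgroup f
  set s := f 1
  have hcoset : ∀ x, (f x)⁻¹ * s ∈ K := fun x => QuotientGroup.eq.mp (hθ x 1)
  set d := f s * s⁻¹
  have hd : ∀ x, f (s * x) = d * f x := map_mul_eq_of_inv_mul_mem_periodSubgroup hf hcoset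
  have hdK : d ∈ K := by simpa [d, mul_comm] using K.inv_mem (hcoset s)
  have hpow : ∀ k : ℕ, f (s ^ k) = d ^ k * s := fun k => by
    induction k with
    | zero => simp [s]
    | succ k ih => rw [pow_succ', hd, ih, ← mul_assoc, ← pow_succ']
  have hdQ : d ^ Nat.card (M ⧸ K) = 1 := by
    have hsQ : s ^ Nat.card (M ⧸ K) ∈ K :=
      (QuotientGroup.eq_one_iff _).mp (by rw [QuotientGroup.mk_pow, pow_card_eq_one'])
    have h := hsQ 1
    rw [mul_one, hpow] at h
    exact mul_eq_right.mp h
  have hdK' : d ^ Nat.card K = 1 :=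
    congrArg Subtype.val (pow_card_eq_one' (G := K) (x := ⟨d, hdK⟩))
  have hd1 : d = 1 := by simpa [hcop] using pow_gcd_eq_one.mpr ⟨hdK', hdQ⟩
  have hsK : s ∈ K := fun x => by rw [hd, hd1, one_mul]
  have hrange : Set.range f ⊆ K := by
    rintro _ ⟨x, rfl⟩
    simpa using K.mul_mem hsK (K.inv_mem (hcoset x))
  rw [eq_top_iff, ← hgen]
  exact (Subgroup.closure_le K).mpr hrange

end PeriodSubgroup

theorem map_eq_map_of_squarefree_card {M : Type*} [CommGroup M] [Finite M]
    (hsq : Squarefree (Nat.card M)) {f : M → M} (hf : ∀ x y, f (f x * y) * f x = f (f y * x) * f y)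
    (hgen : Subgroup.closure (Set.range f) = ⊤) (x y : M) : f x = f y := by
  induction h : Nat.card M using Nat.strong_induction_on generalizing M with
  | _ n ih =>
  by_cases hbot : periodSubgroup f = ⊥
  · exact eq_of_periodSubgroup_eq_bot hf hgen hbot x y
  set K := periodSubgroup f
  have hcard : Nat.card M = Nat.card (M ⧸ K) * Nat.card K :=
    Subgroup.card_eq_card_quotient_mul_card_subgroup K
  have hlt : Nat.card (M ⧸ K) < n := by
    rw [← h, hcard]
    exact lt_mul_right Nat.card_pos ((Subgroup.one_lt_card_iff_ne_bot K).mpr hbot)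
  have hθ : ∀ u v, periodQuotientMap f u = periodQuotientMap f v := fun u v =>
    ih _ hlt (hsq.squarefree_of_dvd (hcard ▸ dvd_mul_right _ _)) (periodQuotientMap_cycl hf)
      (closure_range_periodQuotientMap hgen) u v rfl
  have hcop : (Nat.card K).Coprime (Nat.card (M ⧸ K)) :=
    Nat.coprime_of_squarefree_mul (by rwa [mul_comm, ← hcard])
  exact eq_of_periodSubgroup_eq_top (periodSubgroup_eq_top_of_coprime hf hgen hcop hθ) x y

namespace CycleSet

variable {X : Type*} (S : CycleSet X)

theorem σ_mem_permGroup (x : X) : S.σ x ∈ S.permGroup :=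
  Subgroup.subset_closure ⟨x, rfl⟩

def groupσ (x₀ : X) (g : S.permGroup) : S.permGroup :=
  ⟨S.σ ((g : Equiv.Perm X) x₀), S.σ_mem_permGroup _⟩

theorem groupσ_cycl (x₀ : X) (g h : S.permGroup) :
    S.groupσ x₀ (S.groupσ x₀ g * h) * S.groupσ x₀ g =
      S.groupσ x₀ (S.groupσ x₀ h * g) * S.groupσ x₀ h :=
  Subtype.ext <| Equiv.ext <| S.cycl _ _

variable {S}

theorem apply_basepoint_surjective (htr : S.Transitive) (x₀ : X) :
    Function.Surjective fun g : S.permGroup => (g : Equiv.Perm X) x₀ := fun y => by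
  obtain ⟨g, hg, rfl⟩ := htr x₀ y
  exact ⟨⟨g, hg⟩, rfl⟩

theorem apply_basepoint_injective (htr : S.Transitive) (hab : S.AbelianPerm) (x₀ : X) :
    Function.Injective fun g : S.permGroup => (g : Equiv.Perm X) x₀ := by
  rintro ⟨g, hg⟩ ⟨h, hh⟩ hgh
  refine Subtype.ext <| Equiv.ext fun y => ?_
  obtain ⟨⟨k, hk⟩, rfl⟩ := apply_basepoint_surjective htr x₀ y
  change (g * k) x₀ = (h * k) x₀
  rw [hab g hg k hk, hab h hh k hk]
  exact congrArg k hgh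

theorem closure_range_groupσ (htr : S.Transitive) (x₀ : X) :
    Subgroup.closure (Set.range (S.groupσ x₀)) = ⊤ := by
  have hrange :
      Set.range (S.groupσ x₀) = ((↑) : S.permGroup → Equiv.Perm X) ⁻¹' Set.range S.σ := by
    ext g
    constructor
    · rintro ⟨h, rfl⟩
      exact ⟨_, rfl⟩
    · rintro ⟨x, hx⟩
      obtain ⟨h, rfl⟩ := apply_basepoint_surjective htr x₀ x
      exact ⟨h, Subtype.ext hx⟩
  rw [hrange]
  exact Subgroup.closure_closure_coe_preimage

theorem σ_map_eq_map_of_squarefree_card [Finite X] (htr : S.Transitive) (hab : S.AbelianPerm)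
    (hsq : Squarefree (Nat.card X)) (x y : X) : S.σ x = S.σ y := by
  let _ : CommGroup S.permGroup :=
    { mul_comm := fun g h => Subtype.ext (hab g g.2 h h.2) }
  have hcard : Nat.card S.permGroup = Nat.card X := Nat.card_eq_of_bijective _
    ⟨apply_basepoint_injective htr hab x, apply_basepoint_surjective htr x⟩
  obtain ⟨g, hg⟩ := apply_basepoint_surjective htr x x
  obtain ⟨h, hh⟩ := apply_basepoint_surjective htr x y
  rw [← hg, ← hh]
  exact congrArg Subtype.val <| map_eq_map_of_squarefree_card (hcard ▸ hsq)
    (S.groupσ_cycl x) (closure_range_groupσ htr x) g h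

theorem multipermLevel_one_of_σ_eq [Nontrivial X] (hσ : ∀ x y, S.σ x = S.σ y) :
    S.MultipermLevel 1 := by
  refine ⟨fun x y z => congrFun (congrArg DFunLike.coe (hσ x y)) z, fun k hk hall => ?_⟩
  obtain rfl : k = 0 := Nat.lt_one_iff.mp hk
  obtain ⟨x, y, hxy⟩ := exists_pair_ne X
  exact hxy (hall x y)

end CycleSet

/-- A finite indecomposable cycle set of cardinality `pq` (`p < q` primes)
with cyclic permutation group has multipermutational level 1. -/
theorem stmt13 {X : Type*} [Finite X] (S : CycleSet X) (p q : ℕ)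
    (hp : p.Prime) (hq : q.Prime) (hpq : p < q)
    (hcard : Nat.card X = p * q) (htr : S.Transitive)
    (hcyc : IsCyclic S.permGroup) :
    S.MultipermLevel 1 := by
  have hab : S.AbelianPerm := fun g hg h hh => by
    let _ := IsCyclic.commGroup (α := S.permGroup)
    exact congrArg Subtype.val (mul_comm (⟨g, hg⟩ : S.permGroup) ⟨h, hh⟩)
  have hsq : Squarefree (Nat.card X) := by
    rw [hcard, Nat.squarefree_mul ((Nat.coprime_primes hp hq).mpr hpq.ne)]
    exact ⟨hp.prime.squarefree, hq.prime.squarefree⟩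
  have : Nontrivial X := Finite.one_lt_card_iff_nontrivial.mp <| by
    rw [hcard]
    exact one_lt_mul_of_lt_of_le hp.one_lt hq.one_lt.le
  exact CycleSet.multipermLevel_one_of_σ_eq (CycleSet.σ_map_eq_map_of_squarefree_card htr hab hsq)
end
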